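/- Universal literal quantifications commute: for any literals ℓ₁, ℓ₂ (possibly of the same variable) and formula φ, ∀ℓ₁(∀ℓ₂·φ) is logically equivalent to ∀ℓ₂(∀ℓ₁·φ). -/

import Mathlib

/-! `∀ℓ·φ` holds at `ω` iff `φ` holds at `ω` and at `ω` with `ℓ` made true. Hence
`∀ℓ₁(∀ℓ₂·φ)` asks for `φ` at `ω`, `ω|ℓ₁`, `ω|ℓ₂` and `(ω|ℓ₁)|ℓ₂`; for distinct variables the last
two updates commute, and for a common variable `(ω|ℓ₁)|ℓ₂ = ω|ℓ₂` is already on the list. -/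

variable {V : Type*} [Fintype V] [DecidableEq V]

/-- Flip the value of variable `x` in world `ω`. -/
def flipAt (ω : V → Bool) (x : V) : V → Bool := Function.update ω x (!(ω x))

/-- `ω` is an `ℓ`-boundary model of `φ`, where `ℓ` is the literal `(x, ω x)` contained in `ω`;
equivalently, `φ` has the b-rule whose antecedent is `ω` restricted away from `x` and whose
consequent is the literal `(x, ω x)`. -/
def HasBRule (φ : (V → Bool) → Prop) (ω : V → Bool) (x : V) : Prop :=
  φ ω ∧ ¬ φ (flipAt ω x)

/-- The set of b-rules of `φ`, encoded as pairs `(ω, x)` where the antecedent is `ω` off `x`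
and the consequent is the literal `(x, ω x)`. -/
def BRules (φ : (V → Bool) → Prop) : Set ((V → Bool) × V) :=
  {p | HasBRule φ p.1 p.2}

/-- `∀ℓ·φ := (ℓ ∨ φ|¬ℓ) ∧ (φ|ℓ)` for the literal `ℓ = (x, b)`. -/
def forallLit (φ : (V → Bool) → Prop) (x : V) (b : Bool) : (V → Bool) → Prop :=
  fun ω => (ω x = b ∨ φ (Function.update ω x (!b))) ∧ φ (Function.update ω x b)

/-- `∃ℓ·φ := (φ|ℓ) ∨ (¬ℓ ∧ φ|¬ℓ)` for the literal `ℓ = (x, b)`. -/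
def existsLit (φ : (V → Bool) → Prop) (x : V) (b : Bool) : (V → Bool) → Prop :=
  fun ω => φ (Function.update ω x b) ∨ (ω x = !b ∧ φ (Function.update ω x (!b)))

/-- `φ` is independent of the literal `(x, b)`: any model containing the literal stays a
model when that literal is flipped. -/
def IndepLit (φ : (V → Bool) → Prop) (x : V) (b : Bool) : Prop :=
  ∀ ω : V → Bool, ω x = b → φ ω → φ (Function.update ω x (!b))

/-- Successive universal literal quantification `∀ℓ₁,…,ℓₙ·φ`. -/
def forallLits (φ : (V → Bool) → Prop) : List (V × Bool) → ((V → Bool) → Prop)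
  | [] => φ
  | p :: L => forallLit (forallLits φ L) p.1 p.2

omit [Fintype V] in
theorem forallLit_iff (φ : (V → Bool) → Prop) (x : V) (b : Bool) (ω : V → Bool) :
    forallLit φ x b ω ↔ φ ω ∧ φ (Function.update ω x b) := by
  by_cases h : ω x = b
  · rw [forallLit, ← h, Function.update_eq_self]
    simp
  · have hnot : (!b) = ω x := by cases b <;> simpa using Ne.symm h
    rw [forallLit, hnot, Function.update_eq_self]
    simp [h]

/-- Universal literal quantifications commute (the literals may be of the same variable). -/
theorem forallLit_comm (φ : (V → Bool) → Prop) (x₁ : V) (b₁ : Bool) (x₂ : V) (b₂ : Bool) :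
    ∀ ω : V → Bool,
      forallLit (forallLit φ x₂ b₂) x₁ b₁ ω ↔ forallLit (forallLit φ x₁ b₁) x₂ b₂ ω := by
  intro ω
  simp only [forallLit_iff]
  by_cases hx : x₁ = x₂
  · subst hx
    simp only [Function.update_idem]
    tauto
  · rw [Function.update_comm hx]
    tauto
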